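/- arXiv:1711.08025 — 4 statements merged into one kernel-verified Lean document; each statement's English description precedes it below -/
import Mathlib

section
/- The periodic infinite word (012)^ω over three letters avoids the formula with reversal xy · ȳx̄: there is no pair of nonempty words U, V such that both UV and reverse(V)·reverse(U) are factors of (012)^ω. -/
def IsFactorOf {α : Type*} (u : List α) (w : ℕ → α) : Prop :=
  ∃ i : ℕ, u = (List.range u.length).map fun k => w (i + k)

/-!
Consecutive letters of (012)^ω go up by one modulo 3, so in every factor of length at least two
the second-to-last letter `a` is followed by `a + 1`. Reversing the factor puts `a + 1` first,
followed by `a`: a step down by one, i.e. up by two modulo 3, which no factor contains.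
-/

namespace IsFactorOf

variable {α : Type*} {u : List α} {w : ℕ → α}

theorem exists_getElem_eq (h : IsFactorOf u w) :
    ∃ i, ∀ k (hk : k < u.length), u[k] = w (i + k) := by
  obtain ⟨i, hi⟩ := h
  refine ⟨i, fun k hk => ?_⟩
  rw [List.getElem_of_eq hi]
  simp

theorem getElem_succ {f : α → α} (hw : ∀ n, w (n + 1) = f (w n)) (h : IsFactorOf u w)
    (k : ℕ) (hk : k + 1 < u.length) : u[k + 1] = f u[k] := by
  obtain ⟨i, hi⟩ := h.exists_getElem_eq
  rw [hi, hi, ← add_assoc, hw]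

end IsFactorOf

theorem not_isFactorOf_mod_three_of_reverse {u : List ℕ} (hu : 2 ≤ u.length)
    (h : IsFactorOf u (· % 3)) : ¬ IsFactorOf u.reverse (· % 3) := by
  intro hrev
  have step : ∀ n, (n + 1) % 3 = (n % 3 + 1) % 3 := fun n => by omega
  have forward := h.getElem_succ (f := fun a => (a + 1) % 3) step (u.length - 2) (by omega)
  have backward := hrev.getElem_succ (f := fun a => (a + 1) % 3) step 0
    (by rw [List.length_reverse]; omega)
  simp only [List.getElem_reverse] at backward
  have hlast : u.length - 2 + 1 = u.length - 1 - 0 := by omega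
  have hprev : u.length - 1 - (0 + 1) = u.length - 2 := by omega
  simp only [hlast, hprev] at forward backward
  omega

/-- (012)^ω avoids the formula with reversal xy · ȳx̄. -/
theorem periodic012_avoids_xy_ybarxbar :
    ¬ ∃ U V : List ℕ, U ≠ [] ∧ V ≠ [] ∧
      IsFactorOf (U ++ V) (fun n => n % 3) ∧
      IsFactorOf (V.reverse ++ U.reverse) (fun n => n % 3) := by
  rintro ⟨U, V, hU, hV, hUV, hVU⟩
  have hlen : 2 ≤ (U ++ V).length := by
    have := List.length_pos_iff.mpr hU
    have := List.length_pos_iff.mpr hV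
    simp only [List.length_append]
    omega
  rw [← List.reverse_append] at hVU
  exact not_isFactorOf_mod_three_of_reverse hlen hUV hVU
end

section
/- The periodic infinite word (012)^ω avoids the formula with reversal xy · yx̄ · ȳ: there do not exist nonempty words U, V such that UV, V·reverse(U), and reverse(V) are all factors of (012)^ω. -/
/-! In `(n mod m)_n` every factor of length two is `[a, (a + 1) % m]`, so for `m ≥ 3` no such
factor occurs together with its reversal. If `|V| ≥ 2`, the first two letters of `V` (a factor of
`UV`) reappear reversed in `reverse V`; if `V = [v]` and `u` is the last letter of `U`, then `UV`
contains `uv` and `V·reverse U` contains `vu`. -/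

theorem IsFactorOf.of_infix {α : Type*} {u v : List α} {w : ℕ → α}
    (hv : v <:+: u) (hu : IsFactorOf u w) : IsFactorOf v w := by
  obtain ⟨s, t, rfl⟩ := hv
  obtain ⟨i, hi⟩ := hu
  refine ⟨i + s.length, List.ext_getElem (by simp) fun k hk _ => ?_⟩
  have := congrArg (·[s.length + k]?) hi
  rw [List.append_assoc, List.getElem?_append_right (by omega), Nat.add_sub_cancel_left,
    List.getElem?_append_left hk, List.getElem?_map, List.getElem?_range (by simp; omega)] at this
  simpa [Nat.add_assoc, List.getElem?_eq_getElem hk] using this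

theorem isFactorOf_pair_mod {m a b : ℕ} (h : IsFactorOf [a, b] (· % m)) :
    b = (a + 1) % m := by
  obtain ⟨i, rfl, rfl⟩ : ∃ i, a = i % m ∧ b = (i + 1) % m := by
    simpa [IsFactorOf, List.range_succ] using h
  rw [Nat.mod_add_mod]

theorem not_isFactorOf_pair_and_swap {m a b : ℕ} (hm : 3 ≤ m)
    (hab : IsFactorOf [a, b] (· % m)) (hba : IsFactorOf [b, a] (· % m)) : False := by
  have h := isFactorOf_pair_mod hba
  rw [isFactorOf_pair_mod hab, Nat.mod_add_mod] at h
  have hmod : a + 0 ≡ a + 2 [MOD m] := by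
    rw [Nat.ModEq, Nat.add_zero, ← h, Nat.mod_eq_of_lt (h ▸ Nat.mod_lt _ (by omega))]
  have hdvd : m ∣ 2 := (Nat.modEq_zero_iff_dvd).mp (Nat.ModEq.add_left_cancel' a hmod).symm
  have := Nat.le_of_dvd two_pos hdvd
  omega

/-- (012)^ω avoids the formula with reversal xy · yx̄ · ȳ. -/
theorem periodic012_avoids_xy_yxbar_ybar :
    ¬ ∃ U V : List ℕ, U ≠ [] ∧ V ≠ [] ∧
      IsFactorOf (U ++ V) (fun n => n % 3) ∧
      IsFactorOf (V ++ U.reverse) (fun n => n % 3) ∧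
      IsFactorOf V.reverse (fun n => n % 3) := by
  rintro ⟨U, V, hU, hV, hUV, hVU, hV'⟩
  rcases V with _ | ⟨v, _ | ⟨v', V⟩⟩
  · exact hV rfl
  · obtain ⟨U, u, rfl⟩ := (List.eq_nil_or_concat U).resolve_left hU
    exact not_isFactorOf_pair_and_swap (a := u) (b := v) le_rfl
      (hUV.of_infix ⟨U, [], by simp⟩) (hVU.of_infix ⟨[], U.reverse, by simp⟩)
  · exact not_isFactorOf_pair_and_swap (a := v) (b := v') le_rfl
      (hUV.of_infix ⟨U, V, by simp⟩) (hV'.of_infix ⟨V.reverse, [], by simp⟩)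
end

section
/- The periodic infinite word (0123)^ω over four letters avoids the formula with reversal xy · yz · z̄x̄ · ȳ: there are no nonempty words U, V, W such that UV, VW, reverse(W)·reverse(U), and reverse(V) are all factors of (0123)^ω. -/
variable {α : Type*} {f : α → α} {w : ℕ → α}

theorem IsFactorOf.isChain (hw : ∀ n, w (n + 1) = f (w n)) {u : List α}
    (hu : IsFactorOf u w) : u.IsChain (fun a b => b = f a) := by
  obtain ⟨i, hi⟩ := hu
  rw [hi, List.isChain_map, List.isChain_range]
  exact fun m _ => hw (i + m)

theorem IsFactorOf.eq_of_pair_infix (hw : ∀ n, w (n + 1) = f (w n)) {u : List α}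
    (hu : IsFactorOf u w) {a b : α} (hab : [a, b] <:+: u) : b = f a :=
  (List.isChain_pair (R := fun a b => b = f a)).mp ((hu.isChain hw).infix hab)

theorem List.length_le_one_of_isChain_of_isChain_reverse (hf : ∀ a, f (f a) ≠ a) {u : List α}
    (hu : u.IsChain (fun a b => b = f a)) (hu' : u.reverse.IsChain (fun a b => b = f a)) :
    u.length ≤ 1 := by
  match u, hu, List.isChain_reverse.mp hu' with
  | [], _, _ | [_], _, _ => simp
  | a :: b :: _, hab, hba =>
    rw [List.isChain_cons_cons] at hab hba
    exact absurd (hab.1 ▸ hba.1).symm (hf a)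

theorem orbit_avoids_reversal_formula (hw : ∀ n, w (n + 1) = f (w n))
    (hf₂ : ∀ a, f (f a) ≠ a) (hf₃ : ∀ a, f (f (f a)) ≠ a) :
    ¬ ∃ U V W : List α, U ≠ [] ∧ V ≠ [] ∧ W ≠ [] ∧
      IsFactorOf (U ++ V) w ∧ IsFactorOf (V ++ W) w ∧
      IsFactorOf (W.reverse ++ U.reverse) w ∧ IsFactorOf V.reverse w := by
  rintro ⟨U, V, W, hU, hV, hW, hUV, hVW, hWU, hV'⟩
  have hlen : V.length ≤ 1 := List.length_le_one_of_isChain_of_isChain_reverse hf₂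
    (hVW.isChain hw).left_of_append (hV'.isChain hw)
  obtain ⟨c, rfl⟩ : ∃ c, V = [c] :=
    List.length_eq_one_iff.mp (by have := List.length_pos_iff.mpr hV; omega)
  obtain ⟨U, x, rfl⟩ := (List.eq_nil_or_concat U).resolve_left hU
  obtain ⟨y, W, rfl⟩ := List.exists_cons_of_ne_nil hW
  have hcx : c = f x := hUV.eq_of_pair_infix hw ⟨U, [], by simp⟩
  have hyc : y = f c := hVW.eq_of_pair_infix hw ⟨[], W, by simp⟩
  have hxy : x = f y := hWU.eq_of_pair_infix hw ⟨W.reverse, U.reverse, by simp⟩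
  exact hf₃ c (by rw [← hyc, ← hxy, hcx])

/-- (0123)^ω avoids the formula with reversal xy · yz · z̄x̄ · ȳ. -/
theorem periodic0123_avoids :
    ¬ ∃ U V W : List ℕ, U ≠ [] ∧ V ≠ [] ∧ W ≠ [] ∧
      IsFactorOf (U ++ V) (fun n => n % 4) ∧
      IsFactorOf (V ++ W) (fun n => n % 4) ∧
      IsFactorOf (W.reverse ++ U.reverse) (fun n => n % 4) ∧
      IsFactorOf V.reverse (fun n => n % 4) :=
  orbit_avoids_reversal_formula (f := fun a => (a + 1) % 4) (fun n => by omega)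
    (fun a => by omega) (fun a => by omega)
end

section
/- Let g = 01/2/031/3 and w = g^ω(0). Then w avoids the pattern xx: no factor of w is a square UU with U nonempty. -/
/-- The morphism g = 01/2/031/3. -/
def g : ℕ → List ℕ
  | 0 => [0, 1]
  | 1 => [2]
  | 2 => [0, 3, 1]
  | _ => [3]

def IsPrefixOf (l : List ℕ) (w : ℕ → ℕ) : Prop :=
  ∀ i, i < l.length → l[i]? = some (w i)

/-- w is the infinite fixed point g^ω(0): every iterate g^n(0) is a prefix of w. -/
def IsFixedPointG (w : ℕ → ℕ) : Prop :=
  ∀ n : ℕ, IsPrefixOf ((fun l => l.flatMap g)^[n] [0]) w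

/-!
Reading `w = g(w)` block by block, position `p` of `w` lies in the block `g (w k)` that starts at
`blockStart w k`. Block boundaries are visible locally: `p` is one iff `w p ≠ 1` and `w (p - 1) ≠ 0`.
As no image `g a` is a prefix of another, `w` can be decoded block by block from any boundary.

Take a square of period `n` at position `i` with `n + i` minimal; it cannot be shifted one step to
the left. If both halves start at a boundary, decoding them gives a square with smaller `n + i`.
Otherwise (the remaining cases are ruled out locally) both halves start with `1`, one preceded by
the `0` of `g 0 = 01`, the other by the `3` of `g 2 = 031`. Decoding from the boundary after that
`1` gives either a smaller square again or a factor `2X0X2` of `w`, which is impossible: `X` would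
have to start with `3`, but `03` is always followed by `1` and a `3` after `2` never is.
-/

lemma g_ne_nil (a : ℕ) : g a ≠ [] := by
  rcases a with _ | _ | _ | _ <;> simp [g]

lemma getElem_g_le_three {a t : ℕ} (ht : t < (g a).length) : (g a)[t] ≤ 3 := by
  rcases a with _ | _ | _ | a <;> simp only [g, List.length_cons, List.length_nil] at ht <;>
    interval_cases t <;> simp [g]

lemma length_le_length_flatMap_g (l : List ℕ) : l.length ≤ (l.flatMap g).length := by
  induction l with
  | nil => simp
  | cons a l ih =>
    have := List.length_pos_of_ne_nil (g_ne_nil a)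
    simp only [List.flatMap_cons, List.length_append, List.length_cons]
    omega

lemma range_prefix_range {k N : ℕ} (h : k ≤ N) : List.range k <+: List.range N := by
  rw [List.prefix_iff_eq_take, List.length_range, List.take_range, Nat.min_eq_left h]

lemma IsPrefixOf.eq_map_range {l : List ℕ} {w : ℕ → ℕ} (h : IsPrefixOf l w) :
    l = (List.range l.length).map w :=
  List.ext_getElem (by simp) fun i hi _ => by simpa [List.getElem?_eq_getElem hi] using h i hi

lemma IsPrefixOf.of_prefix {l₁ l₂ : List ℕ} {w : ℕ → ℕ} (h : l₁ <+: l₂)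
    (h₂ : IsPrefixOf l₂ w) : IsPrefixOf l₁ w := fun i hi => by
  have hi₂ := hi.trans_le h.length_le
  rw [List.getElem?_eq_getElem hi, h.getElem hi, ← List.getElem?_eq_getElem hi₂]
  exact h₂ i hi₂

lemma iterate_flatMap_g_zero (n : ℕ) :
    ∃ l, (fun l => l.flatMap g)^[n] [0] = 0 :: l ∧ n ≤ l.length := by
  induction n with
  | zero => exact ⟨[], rfl, le_rfl⟩
  | succ n ih =>
    obtain ⟨l, hl, hn⟩ := ih
    refine ⟨1 :: l.flatMap g, ?_, ?_⟩
    · rw [Function.iterate_succ_apply', hl]; rfl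
    · have := length_le_length_flatMap_g l
      simp only [List.length_cons]; omega

def blockStart (w : ℕ → ℕ) (k : ℕ) : ℕ := (((List.range k).map w).flatMap g).length

section blockStart

variable (w : ℕ → ℕ)

@[simp] lemma blockStart_zero : blockStart w 0 = 0 := rfl

lemma blockStart_succ (k : ℕ) : blockStart w (k + 1) = blockStart w k + (g (w k)).length := by
  simp [blockStart, List.range_succ]

lemma blockStart_strictMono : StrictMono (blockStart w) :=
  strictMono_nat_of_lt_succ fun k => by
    rw [blockStart_succ]; exact Nat.lt_add_of_pos_right (List.length_pos_of_ne_nil (g_ne_nil _))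

lemma blockStart_add_le (k m : ℕ) : blockStart w k + m ≤ blockStart w (k + m) := by
  induction m with
  | zero => rfl
  | succ m ih => have := blockStart_strictMono w (show k + m < k + (m + 1) by omega); omega

lemma exists_blockStart_add (p : ℕ) :
    ∃ k t, t < (g (w k)).length ∧ blockStart w k + t = p := by
  induction p with
  | zero => exact ⟨0, 0, List.length_pos_of_ne_nil (g_ne_nil _), rfl⟩
  | succ p ih =>
    obtain ⟨k, t, ht, rfl⟩ := ih
    by_cases ht' : t + 1 < (g (w k)).length
    · exact ⟨k, t + 1, ht', rfl⟩
    · refine ⟨k + 1, 0, List.length_pos_of_ne_nil (g_ne_nil _), ?_⟩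
      rw [blockStart_succ]; omega

lemma exists_blockStart_le_lt (p : ℕ) :
    ∃ k, blockStart w k ≤ p ∧ p < blockStart w (k + 1) := by
  obtain ⟨k, t, ht, rfl⟩ := exists_blockStart_add w p
  exact ⟨k, by omega, by rw [blockStart_succ]; omega⟩

end blockStart

def HasSquareAt {α : Type*} (w : ℕ → α) (i n : ℕ) : Prop :=
  ∀ t < n, w (i + t) = w (i + n + t)

lemma HasSquareAt.of_succ {α : Type*} {w : ℕ → α} {i n : ℕ} (h : HasSquareAt w (i + 1) n)
    (h0 : w i = w (i + n)) : HasSquareAt w i n := by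
  rintro (_ | t) ht
  · simpa using h0
  · have := h t (by omega)
    rwa [show i + 1 + t = i + (t + 1) by omega,
      show i + 1 + n + t = i + n + (t + 1) by omega] at this

lemma IsFactorOf.exists_hasSquareAt {α : Type*} {U : List α} {w : ℕ → α}
    (h : IsFactorOf (U ++ U) w) : ∃ i, HasSquareAt w i U.length := by
  obtain ⟨i, hi⟩ := h
  have hget : ∀ j < U.length + U.length, (U ++ U)[j]? = some (w (i + j)) := fun j hj => by
    rw [hi]; simp [hj]
  refine ⟨i, fun t ht => ?_⟩
  have h₁ := hget t (by omega)
  have h₂ := hget (U.length + t) (by omega)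
  rw [List.getElem?_append_left ht] at h₁
  rw [List.getElem?_append_right (by omega), Nat.add_sub_cancel_left] at h₂
  rw [add_assoc]
  exact Option.some.inj (h₁.symm.trans h₂)

namespace IsFixedPointG

variable {w : ℕ → ℕ}

lemma isPrefixOf_flatMap_map_range (hw : IsFixedPointG w) (k : ℕ) :
    IsPrefixOf (((List.range k).map w).flatMap g) w := by
  obtain ⟨l, hl, hk⟩ := iterate_flatMap_g_zero k
  have hpre : (List.range k).map w <+: (fun l => l.flatMap g)^[k] [0] := by
    rw [(hw k).eq_map_range, hl]
    exact (range_prefix_range (by simp; omega)).map w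
  refine IsPrefixOf.of_prefix (hpre.flatMap g) ?_
  simpa only [Function.iterate_succ_apply'] using hw (k + 1)

lemma apply_blockStart_add (hw : IsFixedPointG w) {k t : ℕ} (ht : t < (g (w k)).length) :
    w (blockStart w k + t) = (g (w k))[t] := by
  have h := hw.isPrefixOf_flatMap_map_range (k + 1) (blockStart w k + t)
    (by rw [← blockStart, blockStart_succ]; omega)
  simp only [List.range_succ, List.map_append, List.flatMap_append, List.map_cons, List.map_nil,
    List.flatMap_cons, List.flatMap_nil, List.append_nil] at h
  rw [List.getElem?_append_right (by simp [blockStart]), blockStart, Nat.add_sub_cancel_left,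
    List.getElem?_eq_getElem ht] at h
  exact (Option.some.inj h).symm

lemma apply_zero (hw : IsFixedPointG w) : w 0 = 0 := by
  simpa using (hw 0 0 (by simp)).symm

lemma apply_le_three (hw : IsFixedPointG w) (p : ℕ) : w p ≤ 3 := by
  obtain ⟨k, t, ht, rfl⟩ := exists_blockStart_add w p
  rw [hw.apply_blockStart_add ht]
  exact getElem_g_le_three ht

lemma block_cases (hw : IsFixedPointG w) (k : ℕ) :
    (w k = 0 ∧ w (blockStart w k) = 0 ∧ w (blockStart w k + 1) = 1 ∧
        blockStart w (k + 1) = blockStart w k + 2) ∨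
      (w k = 1 ∧ w (blockStart w k) = 2 ∧ blockStart w (k + 1) = blockStart w k + 1) ∨
      (w k = 2 ∧ w (blockStart w k) = 0 ∧ w (blockStart w k + 1) = 3 ∧
        w (blockStart w k + 2) = 1 ∧ blockStart w (k + 1) = blockStart w k + 3) ∨
      (w k = 3 ∧ w (blockStart w k) = 3 ∧ blockStart w (k + 1) = blockStart w k + 1) := by
  have hb : ∀ t (ht : t < (g (w k)).length), w (blockStart w k + t) = (g (w k))[t] :=
    fun t ht => hw.apply_blockStart_add ht
  rw [blockStart_succ]
  have := hw.apply_le_three k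
  interval_cases h : w k <;> simp only [g, List.length_cons, List.length_nil] at hb
  · exact Or.inl ⟨rfl, hb 0 (by simp), hb 1 (by simp), rfl⟩
  · exact Or.inr <| Or.inl ⟨rfl, hb 0 (by simp), rfl⟩
  · exact Or.inr <| Or.inr <| Or.inl ⟨rfl, hb 0 (by simp), hb 1 (by simp), hb 2 (by simp), rfl⟩
  · exact Or.inr <| Or.inr <| Or.inr ⟨rfl, hb 0 (by simp), rfl⟩

lemma lt_blockStart (hw : IsFixedPointG w) {k : ℕ} (hk : 0 < k) : k < blockStart w k := by
  have h1 : blockStart w 1 = 2 := by rw [blockStart_succ, hw.apply_zero]; rfl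
  have := blockStart_add_le w 1 (k - 1)
  rw [Nat.add_sub_cancel' hk] at this
  omega

lemma apply_succ_of_apply_eq_zero (hw : IsFixedPointG w) {p : ℕ} (h : w p = 0) :
    w (p + 1) = 1 ∨ w (p + 1) = 3 := by
  obtain ⟨k, hk, hk'⟩ := exists_blockStart_le_lt w p
  rcases hw.block_cases k with hb | hb | hb | hb <;> grind

lemma apply_of_apply_succ_eq_one (hw : IsFixedPointG w) {p : ℕ} (h : w (p + 1) = 1) :
    w p = 0 ∨ w p = 3 := by
  obtain ⟨k, hk, hk'⟩ := exists_blockStart_le_lt w (p + 1)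
  rcases hw.block_cases k with hb | hb | hb | hb <;> grind

lemma apply_eq_zero_of_three_one (hw : IsFixedPointG w) {p : ℕ} (h3 : w (p + 1) = 3)
    (h1 : w (p + 2) = 1) : w p = 0 := by
  obtain ⟨k, hk, hk'⟩ := exists_blockStart_le_lt w (p + 2)
  rcases hw.block_cases k with hb | hb | hb | hb <;> grind (splits := 16)

lemma apply_add_two_of_zero_three (hw : IsFixedPointG w) {p : ℕ} (h0 : w p = 0)
    (h3 : w (p + 1) = 3) : w (p + 2) = 1 := by
  obtain ⟨k, hk, hk'⟩ := exists_blockStart_le_lt w p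
  rcases hw.block_cases k with hb | hb | hb | hb <;> grind (splits := 16)

lemma apply_of_blockStart_eq_zero (hw : IsFixedPointG w) {k : ℕ} (h0 : w (blockStart w k) = 0) :
    (w k = 0 ∧ w (blockStart w k + 1) = 1) ∨ (w k = 2 ∧ w (blockStart w k + 1) = 3) := by
  rcases hw.block_cases k with hb | hb | hb | hb <;> grind

lemma mem_range_blockStart_iff (hw : IsFixedPointG w) {p : ℕ} :
    p ∈ Set.range (blockStart w) ↔ w p ≠ 1 ∧ (p = 0 ∨ w (p - 1) ≠ 0) := by
  constructor
  · rintro ⟨k, rfl⟩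
    rcases k with _ | j
    · simp [hw.apply_zero]
    · rcases hw.block_cases (j + 1) with hb | hb | hb | hb <;>
        rcases hw.block_cases j with hb' | hb' | hb' | hb' <;> grind
  · rintro ⟨h1, h0⟩
    obtain ⟨k, hk, hk'⟩ := exists_blockStart_le_lt w p
    rcases hw.block_cases k with hb | hb | hb | hb <;> grind

lemma mem_range_of_apply_eq_zero (hw : IsFixedPointG w) {p : ℕ} (h0 : w p = 0) :
    p ∈ Set.range (blockStart w) := by
  rcases p with _ | p
  · exact ⟨0, rfl⟩
  refine hw.mem_range_blockStart_iff.2 ⟨by omega, Or.inr fun h => ?_⟩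
  rw [Nat.add_sub_cancel] at h
  rcases hw.apply_succ_of_apply_eq_zero h with h' | h' <;> omega

lemma succ_mem_range_of_apply_eq_one (hw : IsFixedPointG w) {p : ℕ} (h1 : w p = 1) :
    p + 1 ∈ Set.range (blockStart w) := by
  refine hw.mem_range_blockStart_iff.2 ⟨fun h => ?_, Or.inr (by simp [h1])⟩
  rcases hw.apply_of_apply_succ_eq_one h with h' | h' <;> omega

lemma succ_mem_range_of_apply_eq_three (hw : IsFixedPointG w) {p : ℕ}
    (hp : p ∈ Set.range (blockStart w)) (h3 : w p = 3) : p + 1 ∈ Set.range (blockStart w) := by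
  obtain ⟨k, rfl⟩ := hp
  rcases hw.block_cases k with hb | hb | hb | hb <;> grind

lemma apply_pred_eq_zero_of_not_mem_range (hw : IsFixedPointG w) {p : ℕ}
    (hp : p ∉ Set.range (blockStart w)) (h1 : w p ≠ 1) : 0 < p ∧ w (p - 1) = 0 := by
  rw [hw.mem_range_blockStart_iff] at hp
  omega

lemma apply_eq_three_of_not_mem_range (hw : IsFixedPointG w) {p : ℕ}
    (hp : p ∉ Set.range (blockStart w)) (h1 : w p ≠ 1) : w p = 3 ∧ w (p + 1) = 1 := by
  obtain ⟨hp, h0⟩ := hw.apply_pred_eq_zero_of_not_mem_range hp h1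
  obtain ⟨q, rfl⟩ : ∃ q, p = q + 1 := ⟨p - 1, by omega⟩
  rw [Nat.add_sub_cancel] at h0
  have h3 : w (q + 1) = 3 := by have := hw.apply_succ_of_apply_eq_zero h0; omega
  exact ⟨h3, hw.apply_add_two_of_zero_three h0 h3⟩

lemma apply_eq_of_forall_apply_blockStart_add (hw : IsFixedPointG w) {k k' : ℕ}
    (h : ∀ s < (g (w k)).length, w (blockStart w k' + s) = w (blockStart w k + s)) :
    w k' = w k := by
  have h0 : w (blockStart w k') = w (blockStart w k) := h 0 (List.length_pos_of_ne_nil (g_ne_nil _))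
  have h1 : w k = 0 ∨ w k = 2 → w (blockStart w k' + 1) = w (blockStart w k + 1) := by
    rintro (hk | hk) <;> exact h 1 (by simp [hk, g])
  rcases hw.block_cases k with hb | hb | hb | hb <;>
    rcases hw.block_cases k' with hb' | hb' | hb' | hb' <;> omega

lemma apply_add_eq_of_agree (hw : IsFixedPointG w) {k k' m n : ℕ}
    (hm : blockStart w (k + m) ≤ blockStart w k + n)
    (h : ∀ s < n, w (blockStart w k' + s) = w (blockStart w k + s)) :
    (∀ j < m, w (k' + j) = w (k + j)) ∧
      blockStart w (k' + m) + blockStart w k = blockStart w (k + m) + blockStart w k' := by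
  induction m with
  | zero => simp [Nat.add_comm]
  | succ m ih =>
    simp only [← add_assoc] at hm ⊢
    have hmono := (blockStart_strictMono w).monotone (show k + m ≤ k + m + 1 by omega)
    have hk := (blockStart_strictMono w).monotone (Nat.le_add_right k m)
    obtain ⟨hj, hlen⟩ := ih (hmono.trans hm)
    have hsucc := blockStart_succ w (k + m)
    have hlast : w (k' + m) = w (k + m) := by
      refine hw.apply_eq_of_forall_apply_blockStart_add fun s hs => ?_
      have := h (blockStart w (k + m) - blockStart w k + s) (by omega)
      rwa [show blockStart w k' + (blockStart w (k + m) - blockStart w k + s) =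
          blockStart w (k' + m) + s by omega,
        show blockStart w k + (blockStart w (k + m) - blockStart w k + s) =
          blockStart w (k + m) + s by omega] at this
    refine ⟨fun j hjm => ?_, ?_⟩
    · rcases Nat.lt_succ_iff_lt_or_eq.1 hjm with hjm | rfl
      exacts [hj j hjm, hlast]
    · rw [blockStart_succ, hlast]
      omega

lemma mem_range_iff_of_hasSquareAt (hw : IsFixedPointG w) {i n : ℕ} (hsq : HasSquareAt w i n)
    (hn : 0 < n) (h1 : w i ≠ 1) :
    i ∈ Set.range (blockStart w) ↔ i + n ∈ Set.range (blockStart w) := by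
  have e0 : w i = w (i + n) := by simpa using hsq 0 hn
  have e1 : 1 < n → w (i + 1) = w (i + n + 1) := hsq 1
  constructor
  · intro hi
    by_contra hin
    obtain ⟨h3, h1'⟩ := hw.apply_eq_three_of_not_mem_range hin (e0 ▸ h1)
    have hi1 := hw.succ_mem_range_of_apply_eq_three hi (e0.trans h3)
    have := (hw.mem_range_blockStart_iff.1 hi1).1
    rcases Nat.lt_or_ge 1 n with hn' | hn'
    · exact this ((e1 hn').trans h1')
    · exact hin (by rwa [show n = 1 by omega])
  · intro hin
    by_contra hi
    obtain ⟨h3, h1'⟩ := hw.apply_eq_three_of_not_mem_range hi h1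
    have hin1 := hw.succ_mem_range_of_apply_eq_three hin (e0 ▸ h3)
    have := (hw.mem_range_blockStart_iff.1 hin1).1
    rcases Nat.lt_or_ge 1 n with hn' | hn'
    · exact this ((e1 hn').symm.trans h1')
    · rw [show n = 1 by omega] at e0; omega

lemma exists_shorter_square_of_mem_range (hw : IsFixedPointG w) {i n : ℕ}
    (hsq : HasSquareAt w i n) (hn : 0 < n) (hi : i ∈ Set.range (blockStart w))
    (hin : i + n ∈ Set.range (blockStart w)) :
    ∃ m j, 0 < m ∧ m + j < n + i ∧ HasSquareAt w j m := by
  obtain ⟨k, rfl⟩ := hi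
  obtain ⟨k', hk'⟩ := hin
  have hkk' := (blockStart_strictMono w).lt_iff_lt.1
    (show blockStart w k < blockStart w k' by omega)
  obtain ⟨m, rfl⟩ : ∃ m, k' = k + m := ⟨k' - k, by omega⟩
  have hdec := (hw.apply_add_eq_of_agree (k' := k + m) hk'.le fun s hs => by
    rw [hk']; exact (hsq s hs).symm).1
  have := hw.lt_blockStart (k := k + m) (by omega)
  exact ⟨m, k, by omega, by omega, fun t ht => (hdec t ht).symm⟩

lemma not_factor_2X0X2 (hw : IsFixedPointG w) {j m : ℕ} (h2 : w j = 2) (h0 : w (j + m + 1) = 0)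
    (h2' : w (j + 2 * m + 2) = 2) (hX : ∀ t < m, w (j + 1 + t) = w (j + m + 2 + t)) : False := by
  have hnext := hw.apply_succ_of_apply_eq_zero h0
  rcases m with _ | m
  · grind
  have hx0 := hX 0 (by omega)
  have hx : w (j + 1) = 3 := by
    have := fun h => hw.apply_of_apply_succ_eq_one (p := j) h
    grind
  have h1 : w (j + m + 4) = 1 := by
    have := hw.apply_add_two_of_zero_three h0 (by grind)
    grind
  have h1' : w (j + 2) ≠ 1 := fun h => by
    have := hw.apply_eq_zero_of_three_one hx h
    omega
  rcases m with _ | m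
  · grind
  · have := hX 1 (by omega)
    grind

-- Each half is `1 g(X) 03` and the square is followed by `1`: decoding from the boundary after the
-- first `1` gives the square `X2 X2`.
lemma exists_shorter_square_of_one_three (hw : IsFixedPointG w) {i n : ℕ}
    (hsq : HasSquareAt w i n) (hn : 0 < n) (h1 : w i = 1) (h3 : w (i + n - 1) = 3) :
    ∃ m j, 0 < m ∧ m + j < n + i ∧ HasSquareAt w j m := by
  have e0 : w (i + n) = 1 := by simpa [h1] using (hsq 0 hn).symm
  obtain ⟨l, rfl⟩ : ∃ l, n = l + 3 := by
    refine ⟨n - 3, ?_⟩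
    rcases (show n = 1 ∨ n = 2 ∨ 3 ≤ n by omega) with rfl | rfl | h
    · simp_all
    · have := hw.apply_eq_zero_of_three_one (p := i) (by simpa using h3) (by simpa using e0)
      omega
    · omega
  have hK0 : w (i + l + 1) = 0 :=
    hw.apply_eq_zero_of_three_one (by simpa [add_assoc] using h3) (by simpa [add_assoc] using e0)
  obtain ⟨k, hk⟩ := hw.succ_mem_range_of_apply_eq_one h1
  obtain ⟨K, hK⟩ := hw.mem_range_of_apply_eq_zero hK0
  have hK2 : w K = 2 := by
    have := hw.apply_of_blockStart_eq_zero (k := K) (by rw [hK, hK0])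
    grind
  have hKs : blockStart w (K + 1) = i + l + 4 := by rw [blockStart_succ, hK2, hK]; rfl
  have hkK : k ≤ K := (blockStart_strictMono w).le_iff_le.1 (by omega)
  obtain ⟨hX, hlen⟩ := hw.apply_add_eq_of_agree (k := k) (k' := K + 1) (m := K - k) (n := l + 2)
    (by rw [Nat.add_sub_cancel' hkK]; omega) fun s hs => by
      rw [hKs, hk]; have := hsq (s + 1) (by omega); grind
  rw [Nat.add_sub_cancel' hkK] at hlen
  have hr : w (K + 1 + (K - k)) = 2 := by
    have := hsq (l + 1) (by omega)
    have := hsq (l + 2) (by omega)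
    have := hw.apply_of_blockStart_eq_zero (k := K + 1 + (K - k)) (by grind)
    grind
  have hKpos := hw.lt_blockStart (k := K) (Nat.pos_of_ne_zero fun h => by simp [h] at hK)
  exact ⟨K + 1 - k, k, by omega, by omega, fun t ht => by
    rcases Nat.lt_or_ge t (K - k) with ht' | ht' <;> grind⟩

-- The square sits in `03 1g(X)0 1g(X)0`: decoding gives `2X0X` followed by `0`, a square `X0 X0`,
-- or by `2`.
lemma exists_shorter_square_of_three_one_zero (hw : IsFixedPointG w) {i n : ℕ}
    (hsq : HasSquareAt w i n) (h1 : w i = 1) (h0 : w (i + n - 1) = 0) (h3 : w (i - 1) = 3) :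
    ∃ m j, 0 < m ∧ m + j < n + i ∧ HasSquareAt w j m := by
  obtain ⟨j, rfl⟩ : ∃ j, i = j + 2 := by
    refine ⟨i - 2, ?_⟩
    rcases (show i = 0 ∨ i = 1 ∨ 2 ≤ i by omega) with rfl | rfl | h
    · simp_all [hw.apply_zero]
    · simp_all [hw.apply_zero]
    · omega
  obtain ⟨l, rfl⟩ : ∃ l, n = l + 2 := ⟨n - 2, by
    rcases (show n = 0 ∨ n = 1 ∨ 2 ≤ n by omega) with rfl | rfl | h
    · simp_all
    · simp_all
    · omega⟩
  rw [show j + 2 - 1 = j + 1 by omega] at h3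
  rw [show j + 2 + (l + 2) - 1 = j + l + 3 by omega] at h0
  have e0 : w (j + l + 4) = 1 := by have := hsq 0 (by omega); grind
  have hj0 := hw.apply_eq_zero_of_three_one h3 h1
  obtain ⟨k, hk⟩ := hw.mem_range_of_apply_eq_zero hj0
  obtain ⟨K, hK⟩ := hw.mem_range_of_apply_eq_zero h0
  have hk2 : w k = 2 := by
    have := hw.apply_of_blockStart_eq_zero (k := k) (by rw [hk, hj0])
    grind
  have hK0 : w K = 0 := by
    have := hw.apply_of_blockStart_eq_zero (k := K) (by rw [hK, h0])
    grind
  have hks : blockStart w (k + 1) = j + 3 := by rw [blockStart_succ, hk2, hk]; rfl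
  have hKs : blockStart w (K + 1) = j + l + 5 := by rw [blockStart_succ, hK0, hK]; rfl
  have hkK : k + 1 ≤ K := (blockStart_strictMono w).le_iff_le.1 (by omega)
  obtain ⟨hX, hlen⟩ := hw.apply_add_eq_of_agree (k := k + 1) (k' := K + 1) (m := K - (k + 1))
    (n := l) (by rw [Nat.add_sub_cancel' hkK]; omega) fun s hs => by
      rw [hKs, hks]; have := hsq (s + 1) (by omega); grind
  rw [Nat.add_sub_cancel' hkK] at hlen
  have hr := hw.apply_of_blockStart_eq_zero (k := K + 1 + (K - (k + 1)))
    (by have := hsq (l + 1) (by omega); grind)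
  rcases hr with ⟨hr, -⟩ | ⟨hr, -⟩
  · have hKpos := hw.lt_blockStart (k := K) (by omega)
    exact ⟨K - k, k + 1, by omega, by omega, fun t ht => by
      rcases Nat.lt_or_ge t (K - (k + 1)) with ht' | ht' <;> grind⟩
  · exact (hw.not_factor_2X0X2 (j := k) (m := K - (k + 1)) hk2 (by grind) (by grind)
      fun t ht => by grind).elim

lemma exists_shorter_square (hw : IsFixedPointG w) {i n : ℕ} (hsq : HasSquareAt w i n)
    (hn : 0 < n) : ∃ m j, 0 < m ∧ m + j < n + i ∧ HasSquareAt w j m := by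
  have e0 : w i = w (i + n) := by simpa using hsq 0 hn
  have shift : 0 < i → w (i - 1) = w (i + n - 1) →
      ∃ m j, 0 < m ∧ m + j < n + i ∧ HasSquareAt w j m := fun hi h =>
    ⟨n, i - 1, hn, by omega, HasSquareAt.of_succ (by rwa [Nat.sub_add_cancel hi])
      (by rwa [show i - 1 + n = i + n - 1 by omega])⟩
  by_cases h1 : w i = 1
  · have hi : 0 < i := Nat.pos_of_ne_zero fun h => by simp [h, hw.apply_zero] at h1
    have hn2 : 1 < n := by
      by_contra! h
      obtain rfl : n = 1 := by omega
      have := hw.apply_of_apply_succ_eq_one (p := i) (by omega)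
      omega
    rcases hw.apply_of_apply_succ_eq_one (p := i + n - 1)
      (by rw [Nat.sub_add_cancel (by omega)]; omega) with h0 | h3
    · rcases hw.apply_of_apply_succ_eq_one (p := i - 1)
        (by rwa [Nat.sub_add_cancel hi]) with h0' | h3'
      · exact shift hi (h0'.trans h0.symm)
      · exact hw.exists_shorter_square_of_three_one_zero hsq h1 h0 h3'
    · exact hw.exists_shorter_square_of_one_three hsq hn h1 h3
  · have hiff := hw.mem_range_iff_of_hasSquareAt hsq hn h1
    by_cases hi : i ∈ Set.range (blockStart w)
    · exact hw.exists_shorter_square_of_mem_range hsq hn hi (hiff.1 hi)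
    · obtain ⟨-, hin⟩ := hw.apply_pred_eq_zero_of_not_mem_range (hiff.not.1 hi) (e0 ▸ h1)
      obtain ⟨hi0, hi⟩ := hw.apply_pred_eq_zero_of_not_mem_range hi h1
      exact shift hi0 (hi.trans hin.symm)

theorem not_hasSquareAt (hw : IsFixedPointG w) {i n : ℕ} (hn : 0 < n) : ¬ HasSquareAt w i n := by
  induction h : n + i using Nat.strong_induction_on generalizing i n with
  | _ N ih =>
    intro hsq
    obtain ⟨m, j, hm, hlt, hsq'⟩ := hw.exists_shorter_square hsq hn
    exact ih (m + j) (h ▸ hlt) hm rfl hsq'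

end IsFixedPointG

/-- g^ω(0) avoids the pattern xx. -/
theorem g_fixed_point_squarefree (w : ℕ → ℕ) (hw : IsFixedPointG w) :
    ∀ U : List ℕ, U ≠ [] → ¬ IsFactorOf (U ++ U) w := by
  intro U hU hfac
  obtain ⟨i, hsq⟩ := hfac.exists_hasSquareAt
  exact hw.not_hasSquareAt (List.length_pos_of_ne_nil hU) hsq
end
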